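/- arXiv:2506.06736 — 6 statements merged into one kernel-verified Lean document; each statement's English description precedes it below -/
import Mathlib

section
/- Let 0 < α ≤ 1 be a real number and let 0 < σ₁ ≤ σ₂ be real numbers. Then 0 ≤ (σ₂^α − σ₁^α)² ≤ α·(σ₂ − σ₁)^{α+1}·σ₁^{α−1}. -/
open Real Set

lemma real_rpow_add_le_add_rpow {a b p : ℝ} (ha : 0 ≤ a) (hb : 0 ≤ b)
    (hp : 0 ≤ p) (hp1 : p ≤ 1) : (a + b) ^ p ≤ a ^ p + b ^ p := by
  have h := NNReal.rpow_add_le_add_rpow a.toNNReal b.toNNReal hp hp1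
  have := NNReal.coe_le_coe.2 h
  simpa [NNReal.coe_rpow, Real.coe_toNNReal, ha, hb, add_nonneg ha hb] using this

/-- Lemma 2.1: for `0 < α ≤ 1` and `0 < σ₁ ≤ σ₂`,
`0 ≤ (σ₂^α − σ₁^α)² ≤ α (σ₂ − σ₁)^(α+1) σ₁^(α−1)`. -/
theorem rpow_diff_sq_le (α σ₁ σ₂ : ℝ) (hα0 : 0 < α) (hα1 : α ≤ 1)
    (hσ1 : 0 < σ₁) (hσ12 : σ₁ ≤ σ₂) :
    0 ≤ (σ₂ ^ α - σ₁ ^ α) ^ 2 ∧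
      (σ₂ ^ α - σ₁ ^ α) ^ 2 ≤ α * (σ₂ - σ₁) ^ (α + 1) * σ₁ ^ (α - 1) := by
  refine ⟨sq_nonneg _, ?_⟩
  have hd : (0:ℝ) ≤ σ₂ - σ₁ := by linarith
  have hdiff : 0 ≤ σ₂ ^ α - σ₁ ^ α :=
    sub_nonneg.2 (Real.rpow_le_rpow hσ1.le hσ12 hα0.le)
  -- subadditivity bound
  have h1 : σ₂ ^ α - σ₁ ^ α ≤ (σ₂ - σ₁) ^ α := by
    have := real_rpow_add_le_add_rpow hσ1.le hd hα0.le hα1 (p := α)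
    rw [add_sub_cancel] at this
    linarith
  -- Bernoulli / concavity bound
  have h2 : σ₂ ^ α - σ₁ ^ α ≤ α * σ₁ ^ (α - 1) * (σ₂ - σ₁) := by
    have hs : (-1:ℝ) ≤ (σ₂ - σ₁) / σ₁ := le_trans (by norm_num) (div_nonneg hd hσ1.le)
    have hb := rpow_one_add_le_one_add_mul_self hs hα0.le hα1
    have h1s : 1 + (σ₂ - σ₁) / σ₁ = σ₂ / σ₁ := by field_simp; ring
    rw [h1s, Real.div_rpow (by linarith) hσ1.le] at hb
    have hmul := mul_le_mul_of_nonneg_right hb (Real.rpow_nonneg hσ1.le α)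
    rw [div_mul_cancel₀ _ (ne_of_gt (Real.rpow_pos_of_pos hσ1 α))] at hmul
    have key : σ₁ ^ α / σ₁ = σ₁ ^ (α - 1) := by
      rw [Real.rpow_sub hσ1, Real.rpow_one]
    have expand : (1 + α * ((σ₂ - σ₁) / σ₁)) * σ₁ ^ α
        = σ₁ ^ α + α * σ₁ ^ (α - 1) * (σ₂ - σ₁) := by
      rw [← key]; field_simp
    rw [expand] at hmul
    linarith
  -- combine
  have hprod : (σ₂ ^ α - σ₁ ^ α) ^ 2 ≤ (σ₂ - σ₁) ^ α * (α * σ₁ ^ (α - 1) * (σ₂ - σ₁)) := by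
    rw [sq]
    exact mul_le_mul h1 h2 hdiff (Real.rpow_nonneg hd α)
  have hrw : (σ₂ - σ₁) ^ α * (σ₂ - σ₁) = (σ₂ - σ₁) ^ (α + 1) := by
    rcases eq_or_lt_of_le hd with h | h
    · simp [← h, Real.zero_rpow (ne_of_gt hα0), Real.zero_rpow (by positivity : α + 1 ≠ 0)]
    · rw [Real.rpow_add_one (ne_of_gt h)]
  calc (σ₂ ^ α - σ₁ ^ α) ^ 2 ≤ (σ₂ - σ₁) ^ α * (α * σ₁ ^ (α - 1) * (σ₂ - σ₁)) := hprod
    _ = α * ((σ₂ - σ₁) ^ α * (σ₂ - σ₁)) * σ₁ ^ (α - 1) := by ring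
    _ = α * (σ₂ - σ₁) ^ (α + 1) * σ₁ ^ (α - 1) := by rw [hrw]
end

section
/- Let t₀ < t₁ be real numbers, 0 < α < 1, and let ψ : [t₀,t₁] → ℝⁿ be continuous. Define φ(t) = (1/Γ(α)) ∫_{t₀}^{t} (t−τ)^{α−1} ψ(τ) dτ and F(t) = (1/Γ(1−α)) ∫_{t₀}^{t} (t−τ)^{−α} φ(τ) dτ. Then F is differentiable at every t ∈ (t₀,t₁) with F′(t) = Γ(1)·ψ(t) = ψ(t); that is, the left Caputo fractional derivative of order α of φ exists, is continuous, and equals ψ on (t₀,t₁). -/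
open Real Set MeasureTheory

lemma beta_real {α : ℝ} (hα0 : 0 < α) (hα1 : α < 1) :
    ∫ x in (0:ℝ)..1, x ^ (α - 1) * (1 - x) ^ (-α) = Real.Gamma α * Real.Gamma (1 - α) := by
  have h1α : (0:ℝ) < 1 - α := by linarith
  have h := Complex.Gamma_mul_Gamma_eq_betaIntegral (s := (α:ℂ)) (t := ((1-α:ℝ):ℂ))
    (by simpa using hα0) (by simpa using h1α)
  have hsum : (α:ℂ) + ((1-α:ℝ):ℂ) = 1 := by push_cast; ring
  rw [hsum, Complex.Gamma_one, one_mul] at h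
  have hbeta : Complex.betaIntegral (α:ℂ) ((1-α:ℝ):ℂ)
      = ((∫ x in (0:ℝ)..1, x ^ (α - 1) * (1 - x) ^ (-α) : ℝ) : ℂ) := by
    rw [Complex.betaIntegral, ← intervalIntegral.integral_ofReal]
    apply intervalIntegral.integral_congr
    intro x hx
    rw [uIcc_of_le (by norm_num)] at hx
    simp only [Complex.ofReal_mul]
    rw [Complex.ofReal_cpow hx.1, Complex.ofReal_cpow (by linarith [hx.2] : (0:ℝ) ≤ 1 - x)]
    push_cast
    ring_nf
  rw [hbeta] at h
  rw [Complex.Gamma_ofReal, Complex.Gamma_ofReal, ← Complex.ofReal_mul] at h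
  exact_mod_cast h.symm

lemma kernel_integrable {α s t : ℝ} (hα0 : 0 < α) (hα1 : α < 1) (hst : s < t) :
    IntervalIntegrable (fun τ => (t - τ) ^ (-α) * (τ - s) ^ (α - 1)) volume s t := by
  set m := (s + t) / 2 with hm
  have hsm : s < m := by simp [hm]; linarith
  have hmt : m < t := by simp [hm]; linarith
  have h1 : IntervalIntegrable (fun τ => (t - τ) ^ (-α) * (τ - s) ^ (α - 1)) volume s m := by
    have hint : IntervalIntegrable (fun τ => (τ - s) ^ (α - 1)) volume s m := by
      simpa using (intervalIntegral.intervalIntegrable_rpow' (a := s - s) (b := m - s) (by linarith)).comp_sub_right s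
    have hcont : ContinuousOn (fun τ => (t - τ) ^ (-α)) (Set.uIcc s m) := by
      apply ContinuousOn.rpow_const ((continuous_const.sub continuous_id).continuousOn)
      intro x hx
      rw [uIcc_of_le hsm.le] at hx
      left; simp only [Pi.sub_apply, id_eq]; intro hc; have := sub_eq_zero.mp hc; linarith [hx.2]
    exact hint.continuousOn_mul hcont
  have h2 : IntervalIntegrable (fun τ => (t - τ) ^ (-α) * (τ - s) ^ (α - 1)) volume m t := by
    have hint : IntervalIntegrable (fun τ => (t - τ) ^ (-α)) volume m t := by
      simpa using (intervalIntegral.intervalIntegrable_rpow' (a := t - m) (b := t - t) (by linarith)).comp_sub_left t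
    have hcont : ContinuousOn (fun τ => (τ - s) ^ (α - 1)) (Set.uIcc m t) := by
      apply ContinuousOn.rpow_const ((continuous_id.sub continuous_const).continuousOn)
      intro x hx
      rw [uIcc_of_le hmt.le] at hx
      left; simp only [Pi.sub_apply, id_eq]; intro hc; have := sub_eq_zero.mp hc; linarith [hx.1]
    exact hint.mul_continuousOn hcont
  exact h1.trans h2

lemma kernel_integral {α s t : ℝ} (hα0 : 0 < α) (hα1 : α < 1) (hst : s < t) :
    ∫ τ in s..t, (t - τ) ^ (-α) * (τ - s) ^ (α - 1) = Real.Gamma α * Real.Gamma (1 - α) := by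
  have hts : (0:ℝ) < t - s := by linarith
  have h := intervalIntegral.integral_comp_mul_add
    (a := (0:ℝ)) (b := 1) (f := fun τ => (t - τ) ^ (-α) * (τ - s) ^ (α - 1))
    (c := t - s) (ne_of_gt hts) s
  simp only [mul_zero, zero_add, mul_one, sub_add_cancel, smul_eq_mul] at h
  have h2 : ∫ x in (0:ℝ)..1, (t - ((t - s) * x + s)) ^ (-α) * ((t - s) * x + s - s) ^ (α - 1)
      = (t - s)⁻¹ * ∫ x in (0:ℝ)..1, x ^ (α - 1) * (1 - x) ^ (-α) := by
    rw [← intervalIntegral.integral_const_mul]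
    apply intervalIntegral.integral_congr
    intro x hx
    rw [uIcc_of_le (by norm_num)] at hx
    dsimp only
    have h1x : (0:ℝ) ≤ 1 - x := by linarith [hx.2]
    have e1 : t - ((t - s) * x + s) = (t - s) * (1 - x) := by ring
    have e2 : (t - s) * x + s - s = (t - s) * x := by ring
    rw [e1, e2, Real.mul_rpow hts.le h1x, Real.mul_rpow hts.le hx.1]
    have e3 : (t - s) ^ (-α) * (t - s) ^ (α - 1) = (t - s)⁻¹ := by
      rw [← Real.rpow_add hts, show -α + (α - 1) = -1 by ring, Real.rpow_neg_one]
    calc (t - s) ^ (-α) * (1 - x) ^ (-α) * ((t - s) ^ (α - 1) * x ^ (α - 1))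
        = ((t - s) ^ (-α) * (t - s) ^ (α - 1)) * (x ^ (α - 1) * (1 - x) ^ (-α)) := by ring
      _ = (t - s)⁻¹ * (x ^ (α - 1) * (1 - x) ^ (-α)) := by rw [e3]
  rw [h2] at h
  have := congrArg (fun y => (t - s) * y) h
  rw [← mul_assoc, ← mul_assoc, mul_inv_cancel₀ (ne_of_gt hts), one_mul, one_mul] at this
  rw [← this, beta_real hα0 hα1]

lemma key {n : ℕ} {t₀ α : ℝ} (hα0 : 0 < α) (hα1 : α < 1) (Ψ : ℝ → EuclideanSpace ℝ (Fin n))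
    (hΨ : Continuous Ψ) {t : ℝ} (ht : t₀ < t) :
    ((Real.Gamma (1 - α))⁻¹ • ∫ τ in t₀..t, ((t - τ) ^ (-α)) •
      ((Real.Gamma α)⁻¹ • ∫ s in t₀..τ, ((τ - s) ^ (α - 1)) • Ψ s))
      = ∫ s in t₀..t, Ψ s := by
  have hΓα := Real.Gamma_pos_of_pos hα0
  have hΓ1α := Real.Gamma_pos_of_pos (show (0:ℝ) < 1 - α by linarith)
  set μ := volume.restrict (Set.Ioc t₀ t) with hμ
  set k : ℝ → ℝ → ℝ := fun τ s => (t - τ) ^ (-α) * (τ - s) ^ (α - 1) with hk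
  set g : ℝ → ℝ → EuclideanSpace ℝ (Fin n) :=
    fun τ s => (Set.Ioc t₀ τ).indicator (fun s => k τ s • Ψ s) s with hg
  have hset : ∀ s ∈ Set.Ioo t₀ t, Set.Ici s ∩ Set.Ioc t₀ t = Set.Icc s t := by
    intro s hs; ext x
    simp only [Set.mem_inter_iff, Set.mem_Ici, Set.mem_Ioc, Set.mem_Icc]
    constructor
    · rintro ⟨h1, h2, h3⟩; exact ⟨h1, h3⟩
    · rintro ⟨h1, h2⟩; exact ⟨h1, lt_of_lt_of_le hs.1 h1, h2⟩
  have hgs : ∀ s ∈ Set.Ioo t₀ t,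
      (fun τ => g τ s) = (Set.Ici s).indicator (fun τ => k τ s • Ψ s) := by
    intro s hs; funext τ
    simp only [hg, Set.indicator_apply, Set.mem_Ioc, Set.mem_Ici, hs.1, true_and]
  have hker : ∀ s ∈ Set.Ioo t₀ t,
      ∫ τ in Set.Icc s t, k τ s = Real.Gamma α * Real.Gamma (1 - α) := by
    intro s hs
    rw [MeasureTheory.integral_Icc_eq_integral_Ioc, ← intervalIntegral.integral_of_le hs.2.le]
    exact kernel_integral hα0 hα1 hs.2
  have hC : ∀ s ∈ Set.Ioo t₀ t,
      ∫ τ, g τ s ∂μ = (Real.Gamma α * Real.Gamma (1 - α)) • Ψ s := by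
    intro s hs
    rw [hgs s hs, MeasureTheory.integral_indicator measurableSet_Ici, hμ,
      Measure.restrict_restrict measurableSet_Ici, hset s hs, integral_smul_const, hker s hs]
  have hknn : ∀ s ∈ Set.Ioo t₀ t, ∀ τ ∈ Set.Icc s t, ‖k τ s • Ψ s‖ = k τ s * ‖Ψ s‖ := by
    intro s hs τ hτ
    rw [norm_smul, Real.norm_of_nonneg]
    exact mul_nonneg (Real.rpow_nonneg (by linarith [hτ.2]) _)
      (Real.rpow_nonneg (by linarith [hτ.1]) _)
  have hCnorm : ∀ s ∈ Set.Ioo t₀ t,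
      ∫ τ, ‖g τ s‖ ∂μ = (Real.Gamma α * Real.Gamma (1 - α)) * ‖Ψ s‖ := by
    intro s hs
    have h1 : (fun τ => ‖g τ s‖) = (Set.Ici s).indicator (fun τ => ‖k τ s • Ψ s‖) := by
      rw [show (fun τ => ‖g τ s‖) = fun τ => ‖(fun τ => g τ s) τ‖ from rfl, hgs s hs]
      funext τ
      exact norm_indicator_eq_indicator_norm _ _
    rw [h1, MeasureTheory.integral_indicator measurableSet_Ici, hμ,
      Measure.restrict_restrict measurableSet_Ici, hset s hs,
      MeasureTheory.setIntegral_congr_fun measurableSet_Icc (fun τ hτ => hknn s hs τ hτ),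
      MeasureTheory.integral_mul_const, hker s hs]
  have haeIoo : ∀ᵐ s ∂μ, s ∈ Set.Ioo t₀ t := by
    have h1 : ∀ᵐ s : ℝ ∂volume, s ≠ t := by
      have := measure_singleton (μ := (volume : Measure ℝ)) t
      rw [ae_iff]
      simpa [Set.setOf_eq_eq_singleton] using this
    filter_upwards [ae_restrict_mem measurableSet_Ioc, ae_restrict_of_ae h1] with s hs hne
    exact ⟨hs.1, lt_of_le_of_ne hs.2 hne⟩
  have hkm : Measurable fun p : ℝ × ℝ => k p.1 p.2 := by
    simp only [hk]
    fun_prop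
  have hA : MeasurableSet {p : ℝ × ℝ | t₀ < p.2 ∧ p.2 ≤ p.1} :=
    (measurableSet_lt measurable_const measurable_snd).inter
      (measurableSet_le measurable_snd measurable_fst)
  have hsm : StronglyMeasurable (Function.uncurry g) := by
    have h2 : Function.uncurry g = Set.indicator {p : ℝ × ℝ | t₀ < p.2 ∧ p.2 ≤ p.1}
        (fun p => k p.1 p.2 • Ψ p.2) := by
      funext p
      simp only [Function.uncurry, hg, Set.indicator_apply, Set.mem_Ioc, Set.mem_setOf_eq]
    rw [h2]
    exact ((hkm.smul (hΨ.measurable.comp measurable_snd)).indicator hA).stronglyMeasurable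
  have hfin : IsFiniteMeasure μ := by
    constructor
    rw [hμ, Measure.restrict_apply_univ]
    exact measure_Ioc_lt_top
  obtain ⟨M, hM⟩ := (isCompact_Icc : IsCompact (Set.Icc t₀ t)).exists_bound_of_continuousOn
    hΨ.continuousOn
  have hint : Integrable (Function.uncurry g) (μ.prod μ) := by
    rw [MeasureTheory.integrable_prod_iff' hsm.aestronglyMeasurable]
    constructor
    · filter_upwards [haeIoo] with s hs
      rw [show (fun τ => Function.uncurry g (τ, s)) = fun τ => g τ s from rfl, hgs s hs,
        integrable_indicator_iff measurableSet_Ici]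
      rw [IntegrableOn, hμ, Measure.restrict_restrict measurableSet_Ici, hset s hs]
      have h3 : IntegrableOn (fun τ => k τ s) (Set.Icc s t) volume := by
        rw [integrableOn_Icc_iff_integrableOn_Ioc]
        exact (kernel_integrable hα0 hα1 hs.2).1
      exact h3.smul_const _
    · apply MeasureTheory.Integrable.mono'
        (g := fun _ => Real.Gamma α * Real.Gamma (1 - α) * M) (integrable_const _)
        (hsm.norm.integral_prod_left').aestronglyMeasurable
      filter_upwards [haeIoo] with s hs
      show ‖∫ τ, ‖g τ s‖ ∂μ‖ ≤ _
      rw [hCnorm s hs, Real.norm_of_nonneg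
        (mul_nonneg (le_of_lt (mul_pos hΓα hΓ1α)) (norm_nonneg _))]
      exact mul_le_mul_of_nonneg_left (hM s ⟨hs.1.le, hs.2.le⟩) (le_of_lt (mul_pos hΓα hΓ1α))
  have hinner : ∀ τ ∈ Set.Ioc t₀ t,
      ((t - τ) ^ (-α)) • ((Real.Gamma α)⁻¹ • ∫ s in t₀..τ, ((τ - s) ^ (α - 1)) • Ψ s)
        = (Real.Gamma α)⁻¹ • ∫ s, g τ s ∂μ := by
    intro τ hτ
    rw [intervalIntegral.integral_of_le hτ.1.le, smul_comm]
    congr 1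
    have h4 : ∫ s, g τ s ∂μ = ∫ s in Set.Ioc t₀ t ∩ Set.Ioc t₀ τ, k τ s • Ψ s := by
      rw [hμ]
      exact MeasureTheory.setIntegral_indicator measurableSet_Ioc
    rw [h4, show Set.Ioc t₀ t ∩ Set.Ioc t₀ τ = Set.Ioc t₀ τ by
        rw [Set.Ioc_inter_Ioc, sup_idem, min_eq_right hτ.2]]
    rw [← MeasureTheory.integral_smul]
    apply MeasureTheory.integral_congr_ae
    filter_upwards with s
    rw [smul_smul]
  calc ((Real.Gamma (1 - α))⁻¹ • ∫ τ in t₀..t, ((t - τ) ^ (-α)) •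
        ((Real.Gamma α)⁻¹ • ∫ s in t₀..τ, ((τ - s) ^ (α - 1)) • Ψ s))
      = (Real.Gamma (1 - α))⁻¹ • ∫ τ, ((Real.Gamma α)⁻¹ • ∫ s, g τ s ∂μ) ∂μ := by
        rw [intervalIntegral.integral_of_le ht.le]
        congr 1
        exact MeasureTheory.setIntegral_congr_fun measurableSet_Ioc fun τ hτ => hinner τ hτ
    _ = ((Real.Gamma (1 - α))⁻¹ * (Real.Gamma α)⁻¹) • ∫ τ, (∫ s, g τ s ∂μ) ∂μ := by
        rw [MeasureTheory.integral_smul, smul_smul]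
    _ = ((Real.Gamma (1 - α))⁻¹ * (Real.Gamma α)⁻¹) • ∫ s, (∫ τ, g τ s ∂μ) ∂μ := by
        rw [MeasureTheory.integral_integral_swap hint]
    _ = ((Real.Gamma (1 - α))⁻¹ * (Real.Gamma α)⁻¹) •
          ((Real.Gamma α * Real.Gamma (1 - α)) • ∫ s, Ψ s ∂μ) := by
        congr 1
        rw [← MeasureTheory.integral_smul]
        apply MeasureTheory.integral_congr_ae
        filter_upwards [haeIoo] with s hs
        exact hC s hs
    _ = ∫ s, Ψ s ∂μ := by
        rw [smul_smul, show (Real.Gamma (1 - α))⁻¹ * (Real.Gamma α)⁻¹ *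
          (Real.Gamma α * Real.Gamma (1 - α)) = 1 by field_simp, one_smul]
    _ = ∫ s in t₀..t, Ψ s := (intervalIntegral.integral_of_le ht.le).symm

/-- The left Caputo fractional derivative of order `0 < α < 1` of the left
Riemann–Liouville fractional integral `φ = I^α_{t₀+} ψ` of a continuous function `ψ`
exists and equals `ψ` on `(t₀, t₁)`: the function
`F(t) = (1/Γ(1−α)) ∫_{t₀}^{t} (t−τ)^{−α} φ(τ) dτ` is differentiable on `(t₀,t₁)`
with `F′(t) = ψ(t)`. (Note `φ(t₀) = 0`, so no subtraction of the initial value is needed.) -/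
theorem caputoDeriv_fracInt {n : ℕ} (t₀ t₁ α : ℝ) (ht : t₀ < t₁) (hα0 : 0 < α) (hα1 : α < 1)
    (ψ φ F : ℝ → EuclideanSpace ℝ (Fin n))
    (hψ : ContinuousOn ψ (Set.Icc t₀ t₁))
    (hφ : ∀ t, φ t = (Real.Gamma α)⁻¹ • ∫ τ in t₀..t, ((t - τ) ^ (α - 1)) • ψ τ)
    (hF : ∀ t, F t = (Real.Gamma (1 - α))⁻¹ • ∫ τ in t₀..t, ((t - τ) ^ (-α)) • φ τ) :
    ∀ t ∈ Set.Ioo t₀ t₁, HasDerivAt F (ψ t) t := by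
  intro t htmem
  obtain ⟨Ψc, hΨc⟩ := ContinuousMap.exists_restrict_eq (X := ℝ) isClosed_Icc
    ⟨(Set.Icc t₀ t₁).restrict ψ, hψ.restrict⟩
  set Ψ : ℝ → EuclideanSpace ℝ (Fin n) := ⇑Ψc with hΨdef
  have hΨψ : ∀ x ∈ Set.Icc t₀ t₁, Ψ x = ψ x := by
    intro x hx
    have := congrFun (congrArg DFunLike.coe hΨc) ⟨x, hx⟩
    exact this
  have hΨ : Continuous Ψ := Ψc.continuous
  have hFeq : ∀ u ∈ Set.Ioo t₀ t₁, F u = ∫ s in t₀..u, Ψ s := by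
    intro u hu
    rw [hF u]
    have hφeq : Set.EqOn (fun τ => ((u - τ) ^ (-α)) • φ τ)
        (fun τ => ((u - τ) ^ (-α)) •
          ((Real.Gamma α)⁻¹ • ∫ s in t₀..τ, ((τ - s) ^ (α - 1)) • Ψ s))
        (Set.uIcc t₀ u) := by
      intro τ hτ
      rw [Set.uIcc_of_le hu.1.le] at hτ
      simp only
      congr 1
      rw [hφ τ]
      congr 1
      apply intervalIntegral.integral_congr
      intro s hsmem
      rw [Set.uIcc_of_le hτ.1] at hsmem
      simp only
      rw [hΨψ s ⟨hsmem.1, le_trans (le_trans hsmem.2 hτ.2) hu.2.le⟩]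
    rw [intervalIntegral.integral_congr hφeq]
    exact key hα0 hα1 Ψ hΨ hu.1
  have hG : HasDerivAt (fun u => ∫ s in t₀..u, Ψ s) (Ψ t) t :=
    intervalIntegral.integral_hasDerivAt_right (hΨ.intervalIntegrable _ _)
      hΨ.stronglyMeasurable.stronglyMeasurableAtFilter hΨ.continuousAt
  have heq : F =ᶠ[nhds t] fun u => ∫ s in t₀..u, Ψ s :=
    Filter.eventuallyEq_of_mem (Ioo_mem_nhds htmem.1 htmem.2) hFeq
  have hres := hG.congr_of_eventuallyEq heq
  rwa [hΨψ t ⟨htmem.1.le, htmem.2.le⟩] at hres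
end

section
/- (Du Bois-Reymond lemma, necessity, case β > α.) Let t₀ < t₁ be real numbers, 0 < α ≤ 1, β > α, and let f : [t₀,t₁] → ℝ be continuous. Suppose that for every continuous ψ : [t₀,t₁] → ℝ with ∫_{t₀}^{t₁} (t₁−t)^{α−1} ψ(t) dt = 0 one has ∫_{t₀}^{t₁} (t₁−t)^{β−1} f(t) ψ(t) dt = 0. Then (t₁−t)^{β−α} f(t) = 0 for every t ∈ [t₀,t₁]; equivalently, by continuity, f(t) = 0 for every t ∈ [t₀,t₁]. -/
open Real Set MeasureTheory intervalIntegral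

lemma dbr_weight_intble {t₀ t₁ r : ℝ} (hr : -1 < r) :
    IntervalIntegrable (fun t => (t₁ - t) ^ r) volume t₀ t₁ := by
  have := (intervalIntegral.intervalIntegrable_rpow' (a := 0) (b := t₁ - t₀) hr).comp_sub_left t₁
  simpa using this.symm

lemma dbr_prod_intble {t₀ t₁ r : ℝ} (ht : t₀ ≤ t₁) (hr : -1 < r) {G : ℝ → ℝ}
    (hG : ContinuousOn G (Icc t₀ t₁)) :
    IntervalIntegrable (fun t => (t₁ - t) ^ r * G t) volume t₀ t₁ := by
  obtain ⟨C, hC⟩ := IsCompact.exists_bound_of_continuousOn isCompact_Icc hG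
  rw [intervalIntegrable_iff_integrableOn_Ioc_of_le ht]
  have hw : IntegrableOn (fun t => (t₁ - t) ^ r) (Ioc t₀ t₁) := by
    have := dbr_weight_intble (t₀ := t₀) (t₁ := t₁) hr
    rwa [intervalIntegrable_iff_integrableOn_Ioc_of_le ht] at this
  have hwm : Measurable fun t : ℝ => (t₁ - t) ^ r := by
    apply measurable_of_continuousOn_compl_singleton t₁
    intro x hx
    have hx' : t₁ - x ≠ 0 := sub_ne_zero.2 (Ne.symm hx)
    exact ((Real.continuousAt_rpow_const _ _ (Or.inl hx')).comp
      ((continuous_const.sub continuous_id).continuousAt)).continuousWithinAt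
  refine Integrable.mono' (hw.const_mul C) ?_ ?_
  · exact hwm.aestronglyMeasurable.mul
      ((hG.mono Ioc_subset_Icc_self).aestronglyMeasurable measurableSet_Ioc)
  · rw [ae_restrict_iff' measurableSet_Ioc]
    filter_upwards with t htmem
    have h0 : (0:ℝ) ≤ (t₁ - t) ^ r := Real.rpow_nonneg (by linarith [htmem.2]) r
    have hb := hC t (Ioc_subset_Icc_self htmem)
    calc ‖(t₁ - t) ^ r * G t‖ = (t₁ - t) ^ r * ‖G t‖ := by
          rw [norm_mul, Real.norm_of_nonneg h0]
      _ ≤ (t₁ - t) ^ r * C := mul_le_mul_of_nonneg_left hb h0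
      _ = C * (t₁ - t) ^ r := mul_comm _ _

/-- Du Bois-Reymond lemma, necessity, case `β > α`:
if `f` is continuous on `[t₀,t₁]` and `∫_{t₀}^{t₁} (t₁−t)^(β−1) f(t) ψ(t) dt = 0`
for every continuous `ψ` with `∫_{t₀}^{t₁} (t₁−t)^(α−1) ψ(t) dt = 0`,
then `(t₁−t)^(β−α) f(t) = 0` on `[t₀,t₁]`, equivalently (by continuity) `f = 0` on `[t₀,t₁]`. -/
theorem duBoisReymond_necessity_beta_gt (t₀ t₁ α β : ℝ) (ht : t₀ < t₁)
    (hα0 : 0 < α) (hα1 : α ≤ 1) (hβ : α < β)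
    (f : ℝ → ℝ) (hf : ContinuousOn f (Set.Icc t₀ t₁))
    (h : ∀ ψ : ℝ → ℝ, ContinuousOn ψ (Set.Icc t₀ t₁) →
      (∫ t in t₀..t₁, (t₁ - t) ^ (α - 1) * ψ t) = 0 →
      (∫ t in t₀..t₁, (t₁ - t) ^ (β - 1) * (f t * ψ t)) = 0) :
    ∀ t ∈ Set.Icc t₀ t₁, (t₁ - t) ^ (β - α) * f t = 0 ∧ f t = 0 := by
  have hαr : (-1:ℝ) < α - 1 := by linarith
  have hβα : (0:ℝ) < β - α := by linarith
  have hwc : Continuous fun t : ℝ => (t₁ - t) ^ (β - α) :=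
    (Real.continuous_rpow_const hβα.le).comp (continuous_const.sub continuous_id)
  set g : ℝ → ℝ := fun t => (t₁ - t) ^ (β - α) * f t with hgdef
  have hgc : ContinuousOn g (Icc t₀ t₁) := hwc.continuousOn.mul hf
  have hA : 0 < ∫ t in t₀..t₁, (t₁ - t) ^ (α - 1) :=
    intervalIntegral_pos_of_pos_on (dbr_weight_intble hαr)
      (fun x hx => Real.rpow_pos_of_pos (by linarith [hx.2]) _) ht
  set A := ∫ t in t₀..t₁, (t₁ - t) ^ (α - 1) with hAdef
  set c : ℝ := (∫ t in t₀..t₁, (t₁ - t) ^ (α - 1) * g t) / A with hcdef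
  set ψ : ℝ → ℝ := fun t => g t - c with hψdef
  have hψc : ContinuousOn ψ (Icc t₀ t₁) := hgc.sub continuousOn_const
  have hIg : IntervalIntegrable (fun t => (t₁ - t) ^ (α - 1) * g t) volume t₀ t₁ :=
    dbr_prod_intble ht.le hαr hgc
  have hIw : IntervalIntegrable (fun t => (t₁ - t) ^ (α - 1)) volume t₀ t₁ :=
    dbr_weight_intble hαr
  have hIψ : IntervalIntegrable (fun t => (t₁ - t) ^ (α - 1) * ψ t) volume t₀ t₁ :=
    dbr_prod_intble ht.le hαr hψc
  have hconstraint : (∫ t in t₀..t₁, (t₁ - t) ^ (α - 1) * ψ t) = 0 := by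
    have heq : (fun t => (t₁ - t) ^ (α - 1) * ψ t)
        = fun t => (t₁ - t) ^ (α - 1) * g t - c * ((t₁ - t) ^ (α - 1)) := by
      funext t; simp only [hψdef]; ring
    rw [heq, intervalIntegral.integral_sub hIg (hIw.const_mul c),
      intervalIntegral.integral_const_mul]
    rw [hcdef]
    field_simp
    rw [mul_zero]; apply mul_eq_zero_of_right; exact sub_eq_zero.2 hAdef
  have hKey := h ψ hψc hconstraint
  -- rewrite the β-weighted integral with the α weight
  have hae : (∫ t in t₀..t₁, (t₁ - t) ^ (β - 1) * (f t * ψ t))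
      = ∫ t in t₀..t₁, (t₁ - t) ^ (α - 1) * (g t * ψ t) := by
    apply intervalIntegral.integral_congr_ae
    have h1 : ∀ᵐ t : ℝ, t ≠ t₁ := by
      rw [ae_iff]
      have hset : {a : ℝ | ¬ a ≠ t₁} = {t₁} := by ext x; simp
      rw [hset, Real.volume_singleton]
    filter_upwards [h1] with t htne htmem
    rw [uIoc_of_le ht.le] at htmem
    have h0 : 0 < t₁ - t := sub_pos.2 (lt_of_le_of_ne htmem.2 htne)
    have hsplit : (t₁ - t) ^ (β - 1) = (t₁ - t) ^ (α - 1) * (t₁ - t) ^ (β - α) := by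
      rw [← Real.rpow_add h0]; ring_nf
    rw [hsplit, hgdef]; ring
  have hIψ2 : IntervalIntegrable (fun t => (t₁ - t) ^ (α - 1) * (ψ t) ^ 2) volume t₀ t₁ :=
    dbr_prod_intble ht.le hαr (hψc.pow 2)
  have hsq : (∫ t in t₀..t₁, (t₁ - t) ^ (α - 1) * (ψ t) ^ 2) = 0 := by
    have heq : (fun t => (t₁ - t) ^ (α - 1) * (g t * ψ t))
        = fun t => (t₁ - t) ^ (α - 1) * (ψ t) ^ 2 + c * ((t₁ - t) ^ (α - 1) * ψ t) := by
      funext t; simp only [hψdef]; ring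
    have h2 : (∫ t in t₀..t₁, (t₁ - t) ^ (α - 1) * (g t * ψ t)) = 0 := by
      rw [← hae]; exact hKey
    rw [heq, intervalIntegral.integral_add hIψ2 (hIψ.const_mul c),
      intervalIntegral.integral_const_mul, hconstraint, mul_zero, add_zero] at h2
    exact h2
  -- ψ vanishes on the open interval
  have hψ0 : ∀ s ∈ Ioo t₀ t₁, ψ s = 0 := by
    intro s hs
    by_contra hne
    set F : ℝ → ℝ := fun t => (t₁ - t) ^ (α - 1) * (ψ t) ^ 2 with hFdef
    have hFs : 0 < F s :=
      mul_pos (Real.rpow_pos_of_pos (by linarith [hs.2]) _) (by positivity)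
    have hFc : ContinuousOn F (Ioo t₀ t₁) := by
      apply ContinuousOn.mul
      · intro x hx
        have hx' : t₁ - x ≠ 0 := (sub_pos.2 hx.2).ne'
        exact ((Real.continuousAt_rpow_const _ _ (Or.inl hx')).comp
          ((continuous_const.sub continuous_id).continuousAt)).continuousWithinAt
      · exact (hψc.mono Ioo_subset_Icc_self).pow 2
    have hFs' : ContinuousAt F s := hFc.continuousAt (Ioo_mem_nhds hs.1 hs.2)
    have hev : ∀ᶠ x in nhds s, 0 < F x ∧ x ∈ Ioo t₀ t₁ :=
      (hFs'.eventually (eventually_gt_nhds hFs)).and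
        (isOpen_Ioo.eventually_mem hs)
    obtain ⟨u, v, hsuv, hsub⟩ := mem_nhds_iff_exists_Ioo_subset.mp hev
    set u' := (u + s) / 2 with hu'
    set v' := (s + v) / 2 with hv'
    have hu's : u < u' ∧ u' < s :=
      ⟨by simp only [hu']; linarith [hsuv.1], by simp only [hu']; linarith [hsuv.1]⟩
    have hv's : s < v' ∧ v' < v :=
      ⟨by simp only [hv']; linarith [hsuv.2], by simp only [hv']; linarith [hsuv.2]⟩
    have hu'm : u' ∈ Ioo u v := ⟨hu's.1, lt_trans (lt_trans hu's.2 hv's.1) hv's.2⟩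
    have hv'm : v' ∈ Ioo u v := ⟨lt_trans hu's.1 (lt_trans hu's.2 hv's.1), hv's.2⟩
    have hsubset : Icc u' v' ⊆ Ioo u v := fun x hx =>
      ⟨lt_of_lt_of_le hu's.1 hx.1, lt_of_le_of_lt hx.2 hv's.2⟩
    have hFub : ContinuousOn F (Icc u' v') :=
      hFc.mono (fun x hx => (hsub (hsubset hx)).2)
    have hu'v' : u' < v' := lt_trans hu's.2 hv's.1
    have hpos_small : 0 < ∫ x in u'..v', F x := by
      apply intervalIntegral_pos_of_pos_on
      · apply ContinuousOn.intervalIntegrable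
        rwa [uIcc_of_le hu'v'.le]
      · intro x hx
        exact (hsub (hsubset (Ioo_subset_Icc_self hx))).1
      · exact hu'v'
    have hnn : 0 ≤ᵐ[volume.restrict (Ioc t₀ t₁)] fun t => (t₁ - t) ^ (α - 1) * (ψ t) ^ 2 := by
      rw [Filter.EventuallyLE, ae_restrict_iff' measurableSet_Ioc]
      filter_upwards with x hx
      exact mul_nonneg (Real.rpow_nonneg (by linarith [hx.2]) _) (sq_nonneg _)
    have hmono : (∫ x in u'..v', F x) ≤ ∫ x in t₀..t₁, F x := by
      apply intervalIntegral.integral_mono_interval _ hu'v'.le _ hnn hIψ2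
      · exact (hsub hu'm).2.1.le
      · exact (hsub hv'm).2.2.le
    rw [hsq] at hmono
    linarith
  -- extend to the closed interval by continuity
  have hψ0' : EqOn ψ (fun _ => (0:ℝ)) (Icc t₀ t₁) := by
    apply Set.EqOn.of_subset_closure (s := Ioo t₀ t₁) (fun x hx => hψ0 x hx) hψc
      continuousOn_const Ioo_subset_Icc_self
    rw [closure_Ioo ht.ne]
  have hgt1 : g t₁ = 0 := by
    simp only [hgdef, sub_self, Real.zero_rpow hβα.ne', zero_mul]
  have hc0 : c = 0 := by
    have := hψ0' (right_mem_Icc.2 ht.le)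
    simp only [hψdef] at this
    have : g t₁ - c = 0 := this
    rw [hgt1] at this; linarith
  have hg0 : ∀ t ∈ Icc t₀ t₁, g t = 0 := by
    intro t htm
    have := hψ0' htm
    simp only [hψdef, hc0] at this
    simpa using this
  have hfIco : ∀ x ∈ Ico t₀ t₁, f x = 0 := by
    intro x hx
    have hgx := hg0 x (Ico_subset_Icc_self hx)
    have hwx : (t₁ - x) ^ (β - α) ≠ 0 :=
      (Real.rpow_pos_of_pos (sub_pos.2 hx.2) _).ne'
    simpa only [hgdef, mul_eq_zero, hwx, false_or] using hgx
  have hft1 : f t₁ = 0 := by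
    have hcw : ContinuousWithinAt f (Ico t₀ t₁) t₁ :=
      (hf t₁ (right_mem_Icc.2 ht.le)).mono Ico_subset_Icc_self
    have hclos : t₁ ∈ closure (Ico t₀ t₁) := by
      rw [closure_Ico ht.ne]; exact right_mem_Icc.2 ht.le
    have hnb : (nhdsWithin t₁ (Ico t₀ t₁)).NeBot :=
      mem_closure_iff_nhdsWithin_neBot.mp hclos
    have h0 : Filter.Tendsto f (nhdsWithin t₁ (Ico t₀ t₁)) (nhds 0) := by
      apply Filter.Tendsto.congr' _ tendsto_const_nhds
      filter_upwards [self_mem_nhdsWithin] with x hx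
      exact (hfIco x hx).symm
    exact tendsto_nhds_unique h0 hcw |>.symm
  intro t htm
  refine ⟨hg0 t htm, ?_⟩
  rcases eq_or_lt_of_le htm.2 with heq | hlt
  · rw [heq]; exact hft1
  · exact hfIco t ⟨htm.1, hlt⟩
end

section
/- (Du Bois-Reymond lemma, necessity, case 0 < β ≤ α ≤ 1.) Let t₀ < t₁ be real numbers, 0 < β ≤ α ≤ 1, and let f : [t₀,t₁] → ℝ be continuous. Suppose that for every continuous ψ : [t₀,t₁] → ℝ with ∫_{t₀}^{t₁} (t₁−t)^{α−1} ψ(t) dt = 0 one has ∫_{t₀}^{t₁} (t₁−t)^{β−1} f(t) ψ(t) dt = 0. Then there exists a constant k ∈ ℝ, namely k = ((2α−β)Γ(α)/(t₁−t₀)^{2α−β}) ∫_{t₀}^{t₁} (t₁−t)^{α−1} f(t) dt, such that f(t) = (k/Γ(α))·(t₁−t)^{α−β} for every t ∈ [t₀,t₁]. -/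
open Real Set MeasureTheory

lemma dbr_aux_intble {t₁ : ℝ} {p : ℝ} (hp : -1 < p) (t₀ : ℝ) :
    IntervalIntegrable (fun t => (t₁ - t) ^ p) volume t₀ t₁ := by
  have h := (intervalIntegral.intervalIntegrable_rpow' (a := t₁ - t₀) (b := 0)
    hp).comp_sub_left t₁
  simpa using h

lemma dbr_aux_integral {t₀ t₁ : ℝ} (ht : t₀ < t₁) {p : ℝ} (hp : -1 < p) :
    ∫ t in t₀..t₁, (t₁ - t) ^ p = (t₁ - t₀) ^ (p + 1) / (p + 1) := by
  have h := intervalIntegral.integral_comp_sub_left (a := t₀) (b := t₁)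
    (fun u => u ^ p) t₁
  rw [h, sub_self, integral_rpow (Or.inl hp), Real.zero_rpow (by linarith)]
  ring

/-- Du Bois-Reymond lemma, necessity, case `0 < β ≤ α ≤ 1`:
if `f` is continuous on `[t₀,t₁]` and `∫_{t₀}^{t₁} (t₁−t)^(β−1) f(t) ψ(t) dt = 0`
for every continuous `ψ` with `∫_{t₀}^{t₁} (t₁−t)^(α−1) ψ(t) dt = 0`, then
`f(t) = (k/Γ(α)) (t₁−t)^(α−β)` on `[t₀,t₁]` with
`k = ((2α−β) Γ(α)/(t₁−t₀)^(2α−β)) ∫_{t₀}^{t₁} (t₁−t)^(α−1) f(t) dt`. -/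
theorem duBoisReymond_necessity_beta_le (t₀ t₁ α β : ℝ) (ht : t₀ < t₁)
    (hβ0 : 0 < β) (hβα : β ≤ α) (hα1 : α ≤ 1)
    (f : ℝ → ℝ) (hf : ContinuousOn f (Set.Icc t₀ t₁))
    (h : ∀ ψ : ℝ → ℝ, ContinuousOn ψ (Set.Icc t₀ t₁) →
      (∫ t in t₀..t₁, (t₁ - t) ^ (α - 1) * ψ t) = 0 →
      (∫ t in t₀..t₁, (t₁ - t) ^ (β - 1) * (f t * ψ t)) = 0) :
    ∃ k : ℝ,
      k = (2 * α - β) * Real.Gamma α / (t₁ - t₀) ^ (2 * α - β) *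
            ∫ t in t₀..t₁, (t₁ - t) ^ (α - 1) * f t ∧
      ∀ t ∈ Set.Icc t₀ t₁, f t = k / Real.Gamma α * (t₁ - t) ^ (α - β) := by
  have hα0 : 0 < α := lt_of_lt_of_le hβ0 hβα
  have hΓ : 0 < Real.Gamma α := Real.Gamma_pos_of_pos hα0
  have htt : 0 < t₁ - t₀ := by linarith
  have h2αβ : 0 < 2 * α - β := by linarith
  set I := ∫ t in t₀..t₁, (t₁ - t) ^ (α - 1) * f t with hIdef
  set k : ℝ := (2 * α - β) * Real.Gamma α / (t₁ - t₀) ^ (2 * α - β) * I with hkdef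
  set c : ℝ := k / Real.Gamma α with hcdef
  set g : ℝ → ℝ := fun t => c * (t₁ - t) ^ (α - β) with hgdef
  set ψ : ℝ → ℝ := fun t => f t - g t with hψdef
  -- continuity
  have hgc : Continuous g := by
    apply continuous_const.mul
    exact (Real.continuous_rpow_const (by linarith)).comp (continuous_const.sub continuous_id)
  have contψ : ContinuousOn ψ (Set.Icc t₀ t₁) := hf.sub hgc.continuousOn
  -- integrability of weights
  have hIα : IntervalIntegrable (fun t => (t₁ - t) ^ (α - 1)) volume t₀ t₁ :=
    dbr_aux_intble (by linarith) t₀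
  have hIβ : IntervalIntegrable (fun t => (t₁ - t) ^ (β - 1)) volume t₀ t₁ :=
    dbr_aux_intble (by linarith) t₀
  have huIcc : Set.uIcc t₀ t₁ = Set.Icc t₀ t₁ := Set.uIcc_of_le ht.le
  have hint_f : IntervalIntegrable (fun t => (t₁ - t) ^ (α - 1) * f t) volume t₀ t₁ :=
    hIα.mul_continuousOn (by rw [huIcc]; exact hf)
  have hint_ψα : IntervalIntegrable (fun t => (t₁ - t) ^ (α - 1) * ψ t) volume t₀ t₁ :=
    hIα.mul_continuousOn (by rw [huIcc]; exact contψ)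
  have hint_g : IntervalIntegrable (fun t => (t₁ - t) ^ (α - 1) * g t) volume t₀ t₁ :=
    hIα.mul_continuousOn (by rw [huIcc]; exact hgc.continuousOn)
  -- a.e. basic fact
  have hne : ∀ᵐ t : ℝ, t ≠ t₁ := by
    have : ({t₁} : Set ℝ)ᶜ ∈ ae (volume : Measure ℝ) :=
      compl_mem_ae_iff.2 (measure_singleton t₁)
    exact this
  -- key computation: ∫ (t₁-t)^(α-1) * g t
  have hgint : (∫ t in t₀..t₁, (t₁ - t) ^ (α - 1) * g t)
      = c * ((t₁ - t₀) ^ (2 * α - β) / (2 * α - β)) := by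
    have hcongr : (∫ t in t₀..t₁, (t₁ - t) ^ (α - 1) * g t)
        = ∫ t in t₀..t₁, c * (t₁ - t) ^ (2 * α - β - 1) := by
      apply intervalIntegral.integral_congr_ae
      filter_upwards [hne] with t htne htI
      rw [Set.uIoc_of_le ht.le] at htI
      have htpos : 0 < t₁ - t := sub_pos.2 (lt_of_le_of_ne htI.2 htne)
      simp only [hgdef]
      rw [show (t₁ - t) ^ (α - 1) * (c * (t₁ - t) ^ (α - β))
          = c * ((t₁ - t) ^ (α - 1) * (t₁ - t) ^ (α - β)) by ring,
        ← Real.rpow_add htpos, show α - 1 + (α - β) = 2 * α - β - 1 by ring]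
    rw [hcongr, intervalIntegral.integral_const_mul,
      dbr_aux_integral ht (by linarith : (-1:ℝ) < 2 * α - β - 1),
      show 2 * α - β - 1 + 1 = 2 * α - β by ring]
  -- ∫ (t₁-t)^(α-1) ψ = 0
  have hψ0 : (∫ t in t₀..t₁, (t₁ - t) ^ (α - 1) * ψ t) = 0 := by
    have hsplit : (∫ t in t₀..t₁, (t₁ - t) ^ (α - 1) * ψ t)
        = (∫ t in t₀..t₁, (t₁ - t) ^ (α - 1) * f t)
          - ∫ t in t₀..t₁, (t₁ - t) ^ (α - 1) * g t := by
      rw [← intervalIntegral.integral_sub hint_f hint_g]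
      apply intervalIntegral.integral_congr
      intro t _
      simp only [hψdef]; ring
    rw [hsplit, hgint, ← hIdef]
    have hpow : (0:ℝ) < (t₁ - t₀) ^ (2 * α - β) := Real.rpow_pos_of_pos htt _
    rw [hcdef, hkdef]
    field_simp
    ring
  -- apply hypothesis
  have hfψ := h ψ contψ hψ0
  -- ∫ (t₁-t)^(β-1) (g ψ) = 0
  have hgψ : (∫ t in t₀..t₁, (t₁ - t) ^ (β - 1) * (g t * ψ t)) = 0 := by
    have hcongr : (∫ t in t₀..t₁, (t₁ - t) ^ (β - 1) * (g t * ψ t))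
        = ∫ t in t₀..t₁, c * ((t₁ - t) ^ (α - 1) * ψ t) := by
      apply intervalIntegral.integral_congr_ae
      filter_upwards [hne] with t htne htI
      rw [Set.uIoc_of_le ht.le] at htI
      have htpos : 0 < t₁ - t := sub_pos.2 (lt_of_le_of_ne htI.2 htne)
      simp only [hgdef]
      rw [show (t₁ - t) ^ (β - 1) * (c * (t₁ - t) ^ (α - β) * ψ t)
          = c * (((t₁ - t) ^ (β - 1) * (t₁ - t) ^ (α - β)) * ψ t) by ring,
        ← Real.rpow_add htpos, show β - 1 + (α - β) = α - 1 by ring]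
    rw [hcongr, intervalIntegral.integral_const_mul, hψ0, mul_zero]
  -- ∫ (t₁-t)^(β-1) ψ² = 0
  have hintA : IntervalIntegrable (fun t => (t₁ - t) ^ (β - 1) * (f t * ψ t)) volume t₀ t₁ :=
    hIβ.mul_continuousOn (by rw [huIcc]; exact hf.mul contψ)
  have hintB : IntervalIntegrable (fun t => (t₁ - t) ^ (β - 1) * (g t * ψ t)) volume t₀ t₁ :=
    hIβ.mul_continuousOn (by rw [huIcc]; exact hgc.continuousOn.mul contψ)
  set F : ℝ → ℝ := fun t => (t₁ - t) ^ (β - 1) * ψ t ^ 2 with hFdef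
  have hFi : IntervalIntegrable F volume t₀ t₁ :=
    hIβ.mul_continuousOn (by rw [huIcc]; exact contψ.pow 2)
  have hsq : (∫ t in t₀..t₁, F t) = 0 := by
    have : (∫ t in t₀..t₁, F t)
        = (∫ t in t₀..t₁, (t₁ - t) ^ (β - 1) * (f t * ψ t))
          - ∫ t in t₀..t₁, (t₁ - t) ^ (β - 1) * (g t * ψ t) := by
      rw [← intervalIntegral.integral_sub hintA hintB]
      apply intervalIntegral.integral_congr
      intro t _
      simp only [hFdef, hψdef]; ring
    rw [this, hfψ, hgψ, sub_zero]
  -- F = 0 a.e. on Ioc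
  have hnn : 0 ≤ᵐ[volume.restrict (Set.Ioc t₀ t₁)] F := by
    filter_upwards [ae_restrict_mem measurableSet_Ioc] with t htm
    exact mul_nonneg (Real.rpow_nonneg (by linarith [htm.2]) _) (sq_nonneg _)
  have hK : F =ᵐ[volume.restrict (Set.Ioc t₀ t₁)] 0 :=
    (intervalIntegral.integral_eq_zero_iff_of_le_of_nonneg_ae ht.le hnn hFi).1 hsq
  have hnull : volume ({t | F t ≠ 0} ∩ Set.Ioc t₀ t₁) = 0 := by
    rw [← Measure.restrict_apply' measurableSet_Ioc]
    exact ae_iff.1 hK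
  -- ψ = 0 on Ioo
  have hψIoo : ∀ t ∈ Set.Ioo t₀ t₁, ψ t = 0 := by
    by_contra hcon
    push_neg at hcon
    set U : Set ℝ := Set.Ioo t₀ t₁ ∩ ψ ⁻¹' ({0}ᶜ) with hUdef
    have hUopen : IsOpen U :=
      (contψ.mono Set.Ioo_subset_Icc_self).isOpen_inter_preimage isOpen_Ioo isOpen_compl_singleton
    have hUne : U.Nonempty := by
      obtain ⟨s, hs, hsne⟩ := hcon
      exact ⟨s, hs, hsne⟩
    have hUsub : U ⊆ {t | F t ≠ 0} ∩ Set.Ioc t₀ t₁ := by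
      rintro t ⟨htIoo, htψ⟩
      have htpos : 0 < t₁ - t := sub_pos.2 htIoo.2
      refine ⟨?_, htIoo.1, htIoo.2.le⟩
      have hψne : ψ t ≠ 0 := htψ
      exact mul_ne_zero (Real.rpow_pos_of_pos htpos _).ne' (pow_ne_zero 2 hψne)
    have := hUopen.measure_pos volume hUne
    exact this.ne' (measure_mono_null hUsub hnull)
  -- ψ = 0 on Icc
  have hψIcc : ∀ s ∈ Set.Icc t₀ t₁, ψ s = 0 := by
    intro s hs
    have hscl : s ∈ closure (Set.Ioo t₀ t₁) := by
      rw [closure_Ioo ht.ne]; exact hs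
    haveI : (nhdsWithin s (Set.Ioo t₀ t₁)).NeBot :=
      mem_closure_iff_nhdsWithin_neBot.1 hscl
    have h1 : Filter.Tendsto ψ (nhdsWithin s (Set.Ioo t₀ t₁)) (nhds (ψ s)) :=
      (contψ s hs).mono Set.Ioo_subset_Icc_self
    have h2 : Filter.Tendsto ψ (nhdsWithin s (Set.Ioo t₀ t₁)) (nhds 0) := by
      apply Filter.Tendsto.congr' _ tendsto_const_nhds
      filter_upwards [self_mem_nhdsWithin] with t htm
      exact (hψIoo t htm).symm
    exact tendsto_nhds_unique h1 h2
  refine ⟨k, rfl, ?_⟩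
  intro t htm
  have := hψIcc t htm
  have hft : f t = g t := by
    simp only [hψdef] at this; linarith
  rw [hft, hgdef, hcdef]
end

section
/- Let t₀ < t₁ be real numbers, 0 < α ≤ 1, β > 0, and let a : [t₀,t₁] → ℝ be continuous. Define (Sa)(t) = ((t₁−t)^{1−β}/Γ(α)) ∫_{t}^{t₁} (t₁−τ)^{β−1} (τ−t)^{α−1} a(τ) dτ for t ∈ [t₀,t₁). Then there exists a continuous function g : [t₀,t₁] → ℝ with g(t) = (Sa)(t) for all t ∈ [t₀,t₁); in particular Sa extends to a continuous function on [t₀,t₁]. -/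
open Real Set MeasureTheory

/-- Lemma 3.2: for `0 < α ≤ 1`, `β > 0` and a continuous `a : [t₀,t₁] → ℝ`, the function
`(Sa)(t) = ((t₁−t)^(1−β)/Γ(α)) ∫_t^{t₁} (t₁−τ)^(β−1) (τ−t)^(α−1) a(τ) dτ`, defined on
`[t₀,t₁)`, extends to a continuous function on `[t₀,t₁]`. -/
theorem S_continuous (t₀ t₁ α β : ℝ) (ht : t₀ < t₁) (hα0 : 0 < α) (hα1 : α ≤ 1)
    (hβ : 0 < β)
    (a : ℝ → ℝ) (ha : ContinuousOn a (Set.Icc t₀ t₁))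
    (Sa : ℝ → ℝ)
    (hSa : ∀ t ∈ Set.Ico t₀ t₁, Sa t =
      (t₁ - t) ^ (1 - β) / Real.Gamma α *
        ∫ τ in t..t₁, (t₁ - τ) ^ (β - 1) * ((τ - t) ^ (α - 1) * a τ)) :
    ∃ g : ℝ → ℝ, ContinuousOn g (Set.Icc t₀ t₁) ∧ ∀ t ∈ Set.Ico t₀ t₁, g t = Sa t := by
  obtain ⟨M, hM⟩ := isCompact_Icc.exists_bound_of_continuousOn ha
  set F : ℝ → ℝ := fun t => ∫ s in (0:ℝ)..1,
    (1 - s) ^ (β - 1) * (s ^ (α - 1) * a (t + (t₁ - t) * s)) with hF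
  -- integrability of the beta-type weight
  have hBint : IntervalIntegrable (fun s : ℝ => (1 - s) ^ (β - 1) * s ^ (α - 1))
      MeasureTheory.volume 0 1 := by
    have hL : IntervalIntegrable (fun s : ℝ => (1 - s) ^ (β - 1) * s ^ (α - 1))
        MeasureTheory.volume 0 (1/2) := by
      apply IntervalIntegrable.continuousOn_mul
        (intervalIntegral.intervalIntegrable_rpow' (by linarith))
      apply ContinuousOn.rpow_const (continuous_const.sub continuous_id).continuousOn
      intro x hx
      rw [Set.uIcc_of_le (by norm_num : (0:ℝ) ≤ 1/2)] at hx
      refine Or.inl ?_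
      show (1:ℝ) - x ≠ 0; rw [sub_ne_zero]
      intro h
      have := hx.2
      rw [← h] at this
      norm_num at this
    have hR : IntervalIntegrable (fun s : ℝ => (1 - s) ^ (β - 1) * s ^ (α - 1))
        MeasureTheory.volume (1/2) 1 := by
      have h1 : IntervalIntegrable (fun x : ℝ => x ^ (β - 1))
          MeasureTheory.volume 0 (1/2) := intervalIntegral.intervalIntegrable_rpow' (by linarith)
      have h2 := h1.comp_sub_left 1
      norm_num at h2
      apply IntervalIntegrable.mul_continuousOn h2.symm
      apply ContinuousOn.rpow_const continuous_id.continuousOn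
      intro x hx
      rw [Set.uIcc_of_le (by norm_num : (1:ℝ)/2 ≤ 1)] at hx
      refine Or.inl ?_
      simp only [id_eq]
      intro h
      have := hx.1
      rw [h] at this
      norm_num at this
    exact hL.trans hR
  have hmem : ∀ t ∈ Set.Icc t₀ t₁, ∀ s ∈ Set.Icc (0:ℝ) 1,
      t + (t₁ - t) * s ∈ Set.Icc t₀ t₁ := by
    intro t htI s hs
    have h1 : 0 ≤ (t₁ - t) * s := mul_nonneg (by linarith [htI.2]) hs.1
    have h2 : (t₁ - t) * s ≤ t₁ - t := mul_le_of_le_one_right (by linarith [htI.2]) hs.2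
    exact ⟨by linarith [htI.1], by linarith⟩
  have hFcont : ContinuousOn F (Set.Icc t₀ t₁) := by
    have hG : ContinuousOn (fun t => ∫ s in Set.Ioo (0:ℝ) 1,
        (1 - s) ^ (β - 1) * (s ^ (α - 1) * a (t + (t₁ - t) * s))) (Set.Icc t₀ t₁) := by
      apply MeasureTheory.continuousOn_of_dominated
        (bound := fun s => (1 - s) ^ (β - 1) * (s ^ (α - 1) * M))
      · intro t htI
        apply ContinuousOn.aestronglyMeasurable _ measurableSet_Ioo
        have c1 : ContinuousOn (fun s : ℝ => (1 - s) ^ (β - 1)) (Set.Ioo (0:ℝ) 1) := by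
          apply ContinuousOn.rpow_const (continuous_const.sub continuous_id).continuousOn
          intro x hx
          refine Or.inl ?_
          show (1:ℝ) - x ≠ 0; rw [sub_ne_zero]
          intro h; rw [← h] at hx; exact absurd hx.2 (lt_irrefl _)
        have c2 : ContinuousOn (fun s : ℝ => s ^ (α - 1)) (Set.Ioo (0:ℝ) 1) := by
          apply ContinuousOn.rpow_const continuous_id.continuousOn
          intro x hx
          exact Or.inl (by simp only [id_eq]; exact hx.1.ne')
        have c3 : ContinuousOn (fun s : ℝ => a (t + (t₁ - t) * s)) (Set.Ioo (0:ℝ) 1) := by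
          apply ContinuousOn.mono _ Set.Ioo_subset_Icc_self
          exact ha.comp (continuous_const.add (continuous_const.mul continuous_id)).continuousOn
            fun s hs => hmem t htI s hs
        exact c1.mul (c2.mul c3)
      · intro t htI
        refine (MeasureTheory.ae_restrict_iff' measurableSet_Ioo).2
          (Filter.Eventually.of_forall fun s hs => ?_)
        have hA : (0:ℝ) ≤ (1 - s) ^ (β - 1) := Real.rpow_nonneg (by linarith [hs.2]) _
        have hB : (0:ℝ) ≤ s ^ (α - 1) := Real.rpow_nonneg hs.1.le _
        have haM : |a (t + (t₁ - t) * s)| ≤ M := hM _ (hmem t htI s ⟨hs.1.le, hs.2.le⟩)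
        rw [Real.norm_eq_abs, abs_mul, abs_mul, abs_of_nonneg hA, abs_of_nonneg hB]
        gcongr
      · refine MeasureTheory.Integrable.congr
          (((intervalIntegrable_iff_integrableOn_Ioc_of_le zero_le_one).1 hBint
            |>.mono_set Set.Ioo_subset_Ioc_self).mul_const M) ?_
        exact Filter.Eventually.of_forall fun s => by ring
      · refine (MeasureTheory.ae_restrict_iff' measurableSet_Ioo).2
          (Filter.Eventually.of_forall fun s hs => ?_)
        apply continuousOn_const.mul
        apply continuousOn_const.mul
        exact ha.comp
          (continuous_id.add ((continuous_const.sub continuous_id).mul continuous_const)).continuousOn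
          fun t htI => hmem t htI s ⟨hs.1.le, hs.2.le⟩
    refine hG.congr fun t _ => ?_
    show (∫ s in (0:ℝ)..1, (1 - s) ^ (β - 1) * (s ^ (α - 1) * a (t + (t₁ - t) * s))) = _
    rw [intervalIntegral.integral_of_le zero_le_one,
      MeasureTheory.integral_Ioc_eq_integral_Ioo]
  refine ⟨fun t => (t₁ - t) ^ α / Real.Gamma α * F t, ?_, ?_⟩
  · apply ContinuousOn.mul _ hFcont
    apply ContinuousOn.div_const
    exact (continuous_const.sub continuous_id).continuousOn.rpow_const
      fun x _ => Or.inr hα0.le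
  · intro t htmem
    have hc : (0:ℝ) < t₁ - t := by simp [sub_pos]; exact htmem.2
    rw [hSa t htmem]
    have hsub : (∫ τ in t..t₁, (t₁ - τ) ^ (β - 1) * ((τ - t) ^ (α - 1) * a τ))
        = (t₁ - t) * ((t₁ - t) ^ (β - 1) * ((t₁ - t) ^ (α - 1) * F t)) := by
      have h1 := intervalIntegral.smul_integral_comp_mul_add (a := 0) (b := 1)
        (f := fun x => (t₁ - x) ^ (β - 1) * ((x - t) ^ (α - 1) * a x)) (t₁ - t) t
      norm_num at h1
      rw [← h1]
      congr 1
      have hcong : ∀ s ∈ Set.uIcc (0:ℝ) 1,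
          (t₁ - ((t₁ - t) * s + t)) ^ (β - 1) * (((t₁ - t) * s) ^ (α - 1)
            * a ((t₁ - t) * s + t))
          = (t₁ - t) ^ (β - 1) * ((t₁ - t) ^ (α - 1)
            * ((1 - s) ^ (β - 1) * (s ^ (α - 1) * a (t + (t₁ - t) * s)))) := by
        intro s hs
        rw [Set.uIcc_of_le zero_le_one] at hs
        have e0 : (t₁ - t) * s + t = t + (t₁ - t) * s := by ring
        have e1 : t₁ - ((t₁ - t) * s + t) = (t₁ - t) * (1 - s) := by ring
        rw [e1, e0, Real.mul_rpow hc.le (by linarith [hs.2]),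
          Real.mul_rpow hc.le hs.1]
        ring
      rw [intervalIntegral.integral_congr hcong, intervalIntegral.integral_const_mul,
        intervalIntegral.integral_const_mul]
    rw [hsub]
    have key : (t₁ - t) ^ (1-β) * ((t₁ - t) * ((t₁ - t) ^ (β-1) * (t₁ - t) ^ (α-1)))
        = (t₁ - t) ^ α := by
      rw [Real.rpow_sub hc, Real.rpow_sub hc, Real.rpow_sub hc, Real.rpow_one]
      have h1 : t₁ - t ≠ 0 := hc.ne'
      have h2 : (t₁ - t) ^ β ≠ 0 := (Real.rpow_pos_of_pos hc β).ne'
      field_simp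
    show (t₁ - t) ^ α / Real.Gamma α * F t = _
    rw [← key]
    ring
end

section
/- Let 0 < β ≤ α ≤ 1 and define ψ*(t) = (2α−β)·Γ(α)·(1−t)^{α−β} for t ∈ [0,1]. Then (1/Γ(α)) ∫_0^1 (1−t)^{α−1} ψ*(t) dt = 1, and for every continuous ψ : [0,1] → ℝ with (1/Γ(α)) ∫_0^1 (1−t)^{α−1} ψ(t) dt = 1, one has ∫_0^1 (1−t)^{β−1} ψ(t)² dt ≥ ∫_0^1 (1−t)^{β−1} ψ*(t)² dt. In other words, the function x(t) = (2α−β) ∫_0^t (t−τ)^{α−1} (1−τ)^{α−β} dτ is a global minimizer of J(x) = ∫_0^1 (1−t)^{β−1} ((ᶜD^α_{0+}x)(t))² dt over C^α([0,1],ℝ) subject to x(0) = 0, x(1) = 1. -/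
open Real Set MeasureTheory

private lemma int_one_sub_rpow {p : ℝ} (hp : -1 < p) :
    ∫ t in (0:ℝ)..1, (1 - t) ^ p = 1 / (p + 1) := by
  rw [show (∫ t in (0:ℝ)..1, (1 - t) ^ p) = ∫ t in (1-(1:ℝ))..(1-0), t ^ p from
    intervalIntegral.integral_comp_sub_left (fun x => x ^ p) 1]
  norm_num
  rw [integral_rpow (Or.inl hp)]
  rw [Real.one_rpow, Real.zero_rpow (by linarith)]
  norm_num

private lemma ii_one_sub_rpow {p : ℝ} (hp : -1 < p) :
    IntervalIntegrable (fun t : ℝ => (1 - t) ^ p) volume 0 1 := by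
  have h := (intervalIntegral.intervalIntegrable_rpow' (a := 0) (b := 1) hp).comp_sub_left 1
  simpa using h.symm

private lemma ii_mul {p : ℝ} (hp : -1 < p) {f : ℝ → ℝ}
    (hf : ContinuousOn f (Icc 0 1)) :
    IntervalIntegrable (fun t : ℝ => (1 - t) ^ p * f t) volume 0 1 := by
  obtain ⟨M, hM⟩ := isCompact_Icc.exists_bound_of_continuousOn hf
  apply ((ii_one_sub_rpow hp).mul_const M).mono_fun
  · exact (Measurable.aestronglyMeasurable (by fun_prop : Measurable fun t : ℝ => (1 - t) ^ p)).mul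
      ((hf.mono (by rw [Set.uIoc_of_le zero_le_one]; exact Set.Ioc_subset_Icc_self)).aestronglyMeasurable
        measurableSet_uIoc)
  · filter_upwards [MeasureTheory.ae_restrict_mem measurableSet_uIoc] with t ht
    rw [Set.uIoc_of_le zero_le_one] at ht
    have h1 : (0:ℝ) ≤ 1 - t := by linarith [ht.2]
    have h2 : (0:ℝ) ≤ (1-t)^p := Real.rpow_nonneg h1 p
    have hMt := hM t ⟨ht.1.le, ht.2⟩
    simp only [Real.norm_eq_abs, abs_mul, abs_of_nonneg h2] at *
    have hM0 : 0 ≤ M := le_trans (abs_nonneg _) hMt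
    rw [abs_of_nonneg hM0]
    exact mul_le_mul_of_nonneg_left hMt h2


/-- Example 4.1: for `0 < β ≤ α ≤ 1`, the function `ψ*(t) = (2α−β) Γ(α) (1−t)^(α−β)`
(the Caputo derivative of `x(t) = (2α−β) ∫_0^t (t−τ)^(α−1)(1−τ)^(α−β) dτ`) satisfies the
constraint `(1/Γ(α)) ∫_0^1 (1−t)^(α−1) ψ*(t) dt = 1` (i.e. `x(0) = 0`, `x(1) = 1`) and
minimizes `∫_0^1 (1−t)^(β−1) ψ(t)² dt` among all continuous `ψ` satisfying this
constraint; i.e. `x` is a global minimizer of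
`J(x) = ∫_0^1 (1−t)^(β−1) ((ᶜD^α_{0+}x)(t))² dt` over `C^α([0,1],ℝ)` with `x(0) = 0`,
`x(1) = 1`. -/
theorem example41_global_min (α β : ℝ) (hβ0 : 0 < β) (hβα : β ≤ α) (hα1 : α ≤ 1)
    (ψstar : ℝ → ℝ)
    (hψstar : ∀ t, ψstar t = (2 * α - β) * Real.Gamma α * (1 - t) ^ (α - β)) :
    (Real.Gamma α)⁻¹ * (∫ t in (0:ℝ)..1, (1 - t) ^ (α - 1) * ψstar t) = 1 ∧
    ∀ ψ : ℝ → ℝ, ContinuousOn ψ (Set.Icc (0:ℝ) 1) →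
      (Real.Gamma α)⁻¹ * (∫ t in (0:ℝ)..1, (1 - t) ^ (α - 1) * ψ t) = 1 →
      (∫ t in (0:ℝ)..1, (1 - t) ^ (β - 1) * (ψstar t) ^ 2) ≤
        ∫ t in (0:ℝ)..1, (1 - t) ^ (β - 1) * (ψ t) ^ 2 := by
  have hα0 : 0 < α := lt_of_lt_of_le hβ0 hβα
  have hΓ : 0 < Real.Gamma α := Real.Gamma_pos_of_pos hα0
  have h2 : 0 < 2 * α - β := by linarith
  set c : ℝ := (2 * α - β) * Real.Gamma α with hc
  have hexp : (-1:ℝ) < 2 * α - β - 1 := by linarith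
  have haene : ∀ᵐ t : ℝ, t ≠ (1:ℝ) := by
    rw [MeasureTheory.ae_iff]
    simpa using measure_singleton (1:ℝ)
  have key1 : ∫ t in (0:ℝ)..1, (1 - t) ^ (α - 1) * ψstar t = Real.Gamma α := by
    have heq : ∫ t in (0:ℝ)..1, (1 - t) ^ (α - 1) * ψstar t
        = ∫ t in (0:ℝ)..1, c * (1 - t) ^ (2*α - β - 1) := by
      apply intervalIntegral.integral_congr_ae
      filter_upwards [haene] with t ht1 ht
      rw [Set.uIoc_of_le zero_le_one] at ht
      have h1t : 0 < 1 - t := lt_of_le_of_ne (by linarith [ht.2]) fun h => ht1 (by linarith)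
      rw [hψstar, show (2*α - β - 1) = (α - 1) + (α - β) by ring, Real.rpow_add h1t]
      ring
    rw [heq, intervalIntegral.integral_const_mul, int_one_sub_rpow hexp,
        show (2*α - β - 1 + 1) = 2*α - β by ring, hc]
    field_simp
  refine ⟨by rw [key1]; exact inv_mul_cancel₀ hΓ.ne', ?_⟩
  intro ψ hψc hψconstr
  have hint : ∫ t in (0:ℝ)..1, (1 - t) ^ (α - 1) * ψ t = Real.Gamma α := by
    have h := hψconstr
    field_simp at h
    linarith
  have iψ : IntervalIntegrable (fun t : ℝ => (1-t)^(α-1) * ψ t) volume 0 1 :=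
    ii_mul (by linarith) hψc
  have iψ2 : IntervalIntegrable (fun t : ℝ => (1-t)^(β-1) * ψ t ^ 2) volume 0 1 :=
    ii_mul (by linarith) (hψc.pow 2)
  have ib : IntervalIntegrable (fun t : ℝ => (1-t)^(2*α-β-1)) volume 0 1 := ii_one_sub_rpow hexp
  have hmono : ∫ t in (0:ℝ)..1, (2 * c * ((1-t)^(α-1) * ψ t) - c * c * (1-t)^(2*α-β-1))
      ≤ ∫ t in (0:ℝ)..1, (1-t)^(β-1) * ψ t ^ 2 := by
    apply intervalIntegral.integral_mono_ae_restrict zero_le_one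
      ((iψ.const_mul (2*c)).sub (ib.const_mul (c*c))) iψ2
    filter_upwards [MeasureTheory.ae_restrict_mem measurableSet_Icc,
      MeasureTheory.ae_restrict_of_ae haene] with t ht htne
    have hu : 0 < 1 - t := lt_of_le_of_ne (by linarith [ht.2]) fun h => htne (by linarith)
    have e1 : (1-t)^((β-1)/2) * (1-t)^((β-1)/2) = (1-t)^(β-1) := by
      rw [← Real.rpow_add hu]; norm_num
    have e2 : (1-t)^((2*α-β-1)/2) * (1-t)^((2*α-β-1)/2) = (1-t)^(2*α-β-1) := by
      rw [← Real.rpow_add hu]; norm_num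
    have e3 : (1-t)^((β-1)/2) * (1-t)^((2*α-β-1)/2) = (1-t)^(α-1) := by
      rw [← Real.rpow_add hu]; congr 1; ring
    have h0 : 0 ≤ (1-t)^(β-1) * ψ t ^ 2 - 2*c*((1-t)^(α-1) * ψ t) + c*c*(1-t)^(2*α-β-1) := by
      rw [← e1, ← e2, ← e3]
      nlinarith [sq_nonneg ((1-t)^((β-1)/2) * ψ t - c * (1-t)^((2*α-β-1)/2))]
    linarith
  have lhs_eq : ∫ t in (0:ℝ)..1, (2 * c * ((1-t)^(α-1) * ψ t) - c*c*(1-t)^(2*α-β-1))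
      = c * Real.Gamma α := by
    rw [intervalIntegral.integral_sub (iψ.const_mul _) (ib.const_mul _),
        intervalIntegral.integral_const_mul, intervalIntegral.integral_const_mul,
        hint, int_one_sub_rpow hexp, show (2*α - β - 1 + 1) = 2*α - β by ring, hc]
    field_simp
    ring
  have star_eq : ∫ t in (0:ℝ)..1, (1-t)^(β-1) * (ψstar t)^2 = c * Real.Gamma α := by
    have heq : ∫ t in (0:ℝ)..1, (1-t)^(β-1) * (ψstar t)^2
        = ∫ t in (0:ℝ)..1, (c*c) * (1-t)^(2*α-β-1) := by
      apply intervalIntegral.integral_congr_ae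
      filter_upwards [haene] with t ht1 ht
      rw [Set.uIoc_of_le zero_le_one] at ht
      have hu : 0 < 1 - t := lt_of_le_of_ne (by linarith [ht.2]) fun h => ht1 (by linarith)
      rw [hψstar, pow_two,
        show (2*α-β-1 : ℝ) = (β-1) + ((α-β)+(α-β)) by ring,
        Real.rpow_add hu, Real.rpow_add hu]
      ring
    rw [heq, intervalIntegral.integral_const_mul, int_one_sub_rpow hexp,
        show (2*α - β - 1 + 1) = 2*α - β by ring, hc]
    field_simp
  calc ∫ t in (0:ℝ)..1, (1 - t) ^ (β - 1) * (ψstar t) ^ 2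
      = c * Real.Gamma α := star_eq
    _ = ∫ t in (0:ℝ)..1, (2 * c * ((1-t)^(α-1) * ψ t) - c*c*(1-t)^(2*α-β-1)) := lhs_eq.symm
    _ ≤ _ := hmono
end
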